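/- Let e₁, e₂ ∈ H satisfy B(e₁, e₂) = 0 and Q(e₁) ≠ 0, Q(e₂) ≠ 0, and set a = ι(e₁)·ι(e₂) ∈ C. Then the bilinear form σ_a on C defined by σ_a(x, y) = Tr(L_{x·a·ȳ}) is alternating (σ_a(x, y) = −σ_a(y, x) for all x, y ∈ C) and nondegenerate (for every x ∈ C with x ≠ 0 there exists y ∈ C with σ_a(x, y) ≠ 0). -/

import Mathlib

open CliffordAlgebra

/-- The bilinear form `σ_a(x, y) = Tr (L_{x · a · ȳ})` on the Clifford algebra,
where `ȳ = involute (reverse y)` and `L_w` is left multiplication by `w`. -/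
noncomputable def sigmaForm
    {k : Type*} [Field k]
    {H : Type*} [AddCommGroup H] [Module k H]
    (Q : QuadraticForm k H) (a x y : CliffordAlgebra Q) : k :=
  LinearMap.trace k (CliffordAlgebra Q)
    (LinearMap.mulLeft k (x * a * involute (reverse y)))

/-!
Choose a `B`-orthogonal basis `v` of `H`. The blades `v_S = ∏_{i ∈ S} ι (v i)`, taken in
increasing order, span `C` and multiply as `v_S * v_T = c • v_{S ∆ T}`, with `v_S * v_S` an
invertible scalar. A linear functional `f` with `f (x * y) = f (y * x)` and `f ∘ α = f` kills
every `v_S` with `S ≠ ∅`: odd blades are negated by `α`, and an even blade is `ι (v a) * v_s`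
with `v_s` anticommuting with `ι (v a)`. So such an `f` is determined by `f 1`. Both
`w ↦ Tr L_w` and `w ↦ Tr L_{w̄}` are of this kind, hence equal, and `ā = -a` makes `σ_a`
alternating. For nondegeneracy, the blades are orthogonal for `(u, w) ↦ Tr L_{u w}` with
`Tr L_{v_S v_S} ≠ 0`, because `Tr L_1 = dim C ≠ 0` in characteristic zero; and `x * a ≠ 0`
for `x ≠ 0` since `a` is a unit.
-/

open scoped symmDiff

section LeftRegularTrace

variable (k A : Type*) [CommRing k] [Ring A] [Algebra k A]

noncomputable def leftRegularTrace : A →ₗ[k] k := LinearMap.trace k A ∘ₗ LinearMap.mul k A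

variable {k A}

theorem leftRegularTrace_apply (x : A) :
    leftRegularTrace k A x = LinearMap.trace k A (LinearMap.mulLeft k x) := rfl

theorem leftRegularTrace_mul_comm (x y : A) :
    leftRegularTrace k A (x * y) = leftRegularTrace k A (y * x) := by
  simp only [leftRegularTrace_apply, LinearMap.mulLeft_mul]
  exact LinearMap.trace_mul_comm k _ _

theorem leftRegularTrace_one [Module.Free k A] [Module.Finite k A] :
    leftRegularTrace k A 1 = Module.finrank k A := by
  rw [leftRegularTrace_apply, LinearMap.mulLeft_one, LinearMap.trace_id]

theorem leftRegularTrace_algEquiv_apply (e : A ≃ₐ[k] A) (x : A) :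
    leftRegularTrace k A (e x) = leftRegularTrace k A x := by
  have : LinearMap.mulLeft k (e x) = e.toLinearEquiv.conj (LinearMap.mulLeft k x) := by
    ext y
    simp [LinearEquiv.conj_apply]
  rw [leftRegularTrace_apply, this, LinearMap.trace_conj', leftRegularTrace_apply]

end LeftRegularTrace

namespace CliffordAlgebra

variable {R : Type*} [CommRing R] {M : Type*} [AddCommGroup M] [Module R M]
  {Q : QuadraticForm R M} {I : Type*} [LinearOrder I]

variable (Q) in
noncomputable def basisBlade (v : I → M) (S : Finset I) : CliffordAlgebra Q :=
  ((S.sort (· ≤ ·)).map fun i => ι Q (v i)).prod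

variable {v : I → M}

@[simp]
theorem basisBlade_empty : basisBlade Q v ∅ = 1 := by
  simp [basisBlade]

theorem basisBlade_insert_of_lt {a : I} {s : Finset I} (ha : ∀ x ∈ s, a < x) :
    basisBlade Q v (insert a s) = ι Q (v a) * basisBlade Q v s := by
  have has : a ∉ s := fun h => lt_irrefl a (ha a h)
  rw [basisBlade, Finset.sort_insert _ (fun x hx => (ha x hx).le) has]
  simp [basisBlade]

@[simp]
theorem basisBlade_singleton (a : I) : basisBlade Q v {a} = ι Q (v a) := by
  simpa using basisBlade_insert_of_lt (Q := Q) (v := v) (s := ∅) (a := a) (by simp)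

theorem involute_basisBlade (S : Finset I) :
    involute (basisBlade Q v S) = (-1 : R) ^ S.card • basisBlade Q v S := by
  induction S using Finset.induction_on_min with
  | empty => simp
  | insert a s ha ih =>
    have has : a ∉ s := fun h => lt_irrefl a (ha a h)
    rw [basisBlade_insert_of_lt ha, map_mul, ih, Finset.card_insert_of_notMem has, involute_ι,
      neg_mul, mul_smul_comm, pow_succ, mul_comm, mul_smul, neg_one_smul]

section Orthogonal

variable (hv : Pairwise fun i j => Q.IsOrtho (v i) (v j))
include hv

theorem basisBlade_mul_ι_of_notMem {a : I} {S : Finset I} (haS : a ∉ S) :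
    basisBlade Q v S * ι Q (v a) = (-1 : R) ^ S.card • (ι Q (v a) * basisBlade Q v S) := by
  induction S using Finset.induction_on_min with
  | empty => simp
  | insert b s hb ih =>
    have hbs : b ∉ s := fun h => lt_irrefl b (hb b h)
    have hab : b ≠ a := fun h => haS (h ▸ Finset.mem_insert_self b s)
    rw [basisBlade_insert_of_lt hb, mul_assoc, ih (fun h => haS (Finset.mem_insert_of_mem h)),
      Finset.card_insert_of_notMem hbs, mul_smul_comm, ← mul_assoc,
      ι_mul_ι_comm_of_isOrtho (hv hab), pow_succ, mul_comm, mul_smul, neg_one_smul, neg_mul,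
      smul_neg, mul_assoc]

theorem ι_mul_basisBlade (j : I) (S : Finset I) :
    ∃ c : R, ι Q (v j) * basisBlade Q v S = c • basisBlade Q v ({j} ∆ S) := by
  induction S using Finset.induction_on_min with
  | empty =>
    exact ⟨1, by rw [one_smul, show ({j} : Finset I) ∆ ∅ = {j} from symmDiff_bot _]; simp⟩
  | insert a s ha ih =>
    have has : a ∉ s := fun h => lt_irrefl a (ha a h)
    rw [basisBlade_insert_of_lt ha]
    rcases lt_trichotomy j a with hja | rfl | haj
    · have hj : ∀ x ∈ insert a s, j < x := by
        simpa using ⟨hja, fun x hx => hja.trans (ha x hx)⟩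
      have hjS : j ∉ insert a s := fun h => lt_irrefl j (hj j h)
      refine ⟨1, ?_⟩
      have hsymm : {j} ∆ insert a s = insert j (insert a s) := by
        ext x; simp only [Finset.mem_symmDiff, Finset.mem_insert, Finset.mem_singleton]; grind
      rw [one_smul, hsymm, basisBlade_insert_of_lt hj, basisBlade_insert_of_lt ha]
    · refine ⟨Q (v j), ?_⟩
      have hsymm : {j} ∆ insert j s = s := by
        ext x; simp only [Finset.mem_symmDiff, Finset.mem_insert, Finset.mem_singleton]; grind
      rw [← mul_assoc, ι_sq_scalar, ← Algebra.smul_def, hsymm]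
    · obtain ⟨c, hc⟩ := ih
      have ha' : ∀ x ∈ {j} ∆ s, a < x := by
        intro x hx
        rcases Finset.mem_symmDiff.mp hx with ⟨hx, -⟩ | ⟨hx, -⟩
        · exact (Finset.mem_singleton.mp hx) ▸ haj
        · exact ha x hx
      have hsymm : {j} ∆ insert a s = insert a ({j} ∆ s) := by
        ext x; simp only [Finset.mem_symmDiff, Finset.mem_insert, Finset.mem_singleton]; grind
      refine ⟨-c, ?_⟩
      rw [← mul_assoc, ι_mul_ι_comm_of_isOrtho (hv haj.ne'), neg_mul, mul_assoc, hc, hsymm,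
        basisBlade_insert_of_lt ha', mul_smul_comm, neg_smul]

theorem basisBlade_mul_basisBlade (S T : Finset I) :
    ∃ c : R, basisBlade Q v S * basisBlade Q v T = c • basisBlade Q v (S ∆ T) := by
  induction S using Finset.induction_on_min with
  | empty => exact ⟨1, by rw [one_smul, show ∅ ∆ T = T from bot_symmDiff _]; simp⟩
  | insert a s ha ih =>
    have has : a ∉ s := fun h => lt_irrefl a (ha a h)
    obtain ⟨c, hc⟩ := ih
    obtain ⟨d, hd⟩ := ι_mul_basisBlade hv a (s ∆ T)
    have hsymm : {a} ∆ s = insert a s := by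
      ext x; simp only [Finset.mem_symmDiff, Finset.mem_insert, Finset.mem_singleton]; grind
    refine ⟨c * d, ?_⟩
    rw [basisBlade_insert_of_lt ha, mul_assoc, hc, mul_smul_comm, hd, smul_smul, ← symmDiff_assoc,
      hsymm]

theorem basisBlade_mul_self (hQ : ∀ i, IsUnit (Q (v i))) (S : Finset I) :
    ∃ c : R, IsUnit c ∧ basisBlade Q v S * basisBlade Q v S = algebraMap R _ c := by
  induction S using Finset.induction_on_min with
  | empty => exact ⟨1, isUnit_one, by simp⟩
  | insert a s ha ih =>
    have has : a ∉ s := fun h => lt_irrefl a (ha a h)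
    obtain ⟨c, hc0, hc⟩ := ih
    refine ⟨(-1) ^ s.card * Q (v a) * c, ((isUnit_one.neg.pow _).mul (hQ a)).mul hc0, ?_⟩
    rw [basisBlade_insert_of_lt ha, mul_assoc, ← mul_assoc (basisBlade Q v s),
      basisBlade_mul_ι_of_notMem hv has, smul_mul_assoc, mul_smul_comm, ← mul_assoc,
      ← mul_assoc, ι_sq_scalar, mul_assoc, hc, ← map_mul, Algebra.smul_def, ← map_mul,
      mul_assoc]

theorem span_range_basisBlade (hspan : Submodule.span R (Set.range v) = ⊤) :
    Submodule.span R (Set.range (basisBlade Q v)) = ⊤ := by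
  set W := Submodule.span R (Set.range (basisBlade Q v))
  have hmem (S : Finset I) : basisBlade Q v S ∈ W := Submodule.subset_span ⟨S, rfl⟩
  have hmul (x y : CliffordAlgebra Q) (hx : x ∈ W) (hy : y ∈ W) : x * y ∈ W := by
    refine (show W * W ≤ W from ?_) (Submodule.mul_mem_mul hx hy)
    rw [Submodule.span_mul_span, Submodule.span_le]
    rintro _ ⟨_, ⟨S, rfl⟩, _, ⟨T, rfl⟩, rfl⟩
    obtain ⟨c, hc⟩ := basisBlade_mul_basisBlade hv S T
    change _ * _ ∈ W
    exact hc ▸ W.smul_mem c (hmem _)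
  have hι : Set.range (ι Q) ⊆
      W.toSubalgebra (basisBlade_empty (Q := Q) (v := v) ▸ hmem ∅) hmul := by
    have : Submodule.span R (Set.range v) ≤ W.comap (ι Q) :=
      Submodule.span_le.mpr fun _ ⟨i, hi⟩ => by
        rw [← hi, SetLike.mem_coe, Submodule.mem_comap, ← basisBlade_singleton]
        exact hmem {i}
    rintro _ ⟨x, rfl⟩
    exact this (hspan ▸ Submodule.mem_top)
  have hW := Algebra.adjoin_le hι
  rw [adjoin_range_ι, top_le_iff] at hW
  exact eq_top_iff.mpr fun x _ => Submodule.mem_toSubalgebra.mp (hW ▸ Algebra.mem_top)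

theorem finite_of_span_range_eq_top [Finite I] (hspan : Submodule.span R (Set.range v) = ⊤) :
    Module.Finite R (CliffordAlgebra Q) :=
  .of_fg_top <| Submodule.fg_def.mpr ⟨_, Set.finite_range _, span_range_basisBlade hv hspan⟩

end Orthogonal

section InvariantTrace

variable {k : Type*} [Field k] {H : Type*} [AddCommGroup H] [Module k H] {Q : QuadraticForm k H}

structure IsInvolutionInvariantTrace (f : CliffordAlgebra Q →ₗ[k] k) : Prop where
  map_mul_comm : ∀ x y, f (x * y) = f (y * x)
  map_involute : ∀ x, f (involute x) = f x

theorem isInvolutionInvariantTrace_leftRegularTrace :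
    IsInvolutionInvariantTrace (leftRegularTrace k (CliffordAlgebra Q)) :=
  ⟨leftRegularTrace_mul_comm, leftRegularTrace_algEquiv_apply involuteEquiv⟩

theorem IsInvolutionInvariantTrace.comp_star {f : CliffordAlgebra Q →ₗ[k] k}
    (hf : IsInvolutionInvariantTrace f) :
    IsInvolutionInvariantTrace (f ∘ₗ reverse ∘ₗ involute.toLinearMap) := by
  constructor
  · intro x y
    simp only [LinearMap.comp_apply, AlgHom.toLinearMap_apply, ← star_def, star_mul]
    exact hf.map_mul_comm _ _
  · intro x
    simp only [LinearMap.comp_apply, AlgHom.toLinearMap_apply, involute_involute, reverse_involute]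
    exact (hf.map_involute _).symm

variable [NeZero (2 : k)] {I : Type*} [LinearOrder I] {v : I → H}
  (hv : Pairwise fun i j => Q.IsOrtho (v i) (v j))
include hv

theorem IsInvolutionInvariantTrace.map_basisBlade_eq_zero {f : CliffordAlgebra Q →ₗ[k] k}
    (hf : IsInvolutionInvariantTrace f) {S : Finset I} (hS : S.Nonempty) :
    f (basisBlade Q v S) = 0 := by
  suffices h : f (basisBlade Q v S) = -f (basisBlade Q v S) by
    have h2 : 2 * f (basisBlade Q v S) = 0 := by
      rw [two_mul]; nth_rewrite 1 [h]; exact neg_add_cancel _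
    exact (mul_eq_zero.mp h2).resolve_left two_ne_zero
  rcases Nat.even_or_odd S.card with heven | hodd
  · set a := S.min' hS
    have ha : ∀ x ∈ S.erase a, a < x := fun x hx => S.min'_lt_of_mem_erase_min' hS hx
    have hodd : Odd (S.erase a).card := by
      rw [Finset.card_erase_of_mem (S.min'_mem hS)]
      exact Nat.Even.sub_odd hS.card_pos heven odd_one
    rw [← Finset.insert_erase (S.min'_mem hS), basisBlade_insert_of_lt ha]
    conv_lhs => rw [hf.map_mul_comm, basisBlade_mul_ι_of_notMem hv (Finset.notMem_erase a S),
      hodd.neg_one_pow, neg_one_smul, map_neg]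
  · conv_lhs => rw [← hf.map_involute, involute_basisBlade, hodd.neg_one_pow, neg_one_smul,
      map_neg]

theorem IsInvolutionInvariantTrace.ext (hspan : Submodule.span k (Set.range v) = ⊤)
    {f g : CliffordAlgebra Q →ₗ[k] k} (hf : IsInvolutionInvariantTrace f)
    (hg : IsInvolutionInvariantTrace g) (h1 : f 1 = g 1) : f = g := by
  refine LinearMap.ext_on_range (span_range_basisBlade hv hspan) fun S => ?_
  rcases S.eq_empty_or_nonempty with rfl | hS
  · simpa using h1
  · rw [hf.map_basisBlade_eq_zero hv hS, hg.map_basisBlade_eq_zero hv hS]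

theorem IsInvolutionInvariantTrace.exists_map_mul_ne_zero [Fintype I]
    (hspan : Submodule.span k (Set.range v) = ⊤) (hQ : ∀ i, Q (v i) ≠ 0)
    {f : CliffordAlgebra Q →ₗ[k] k} (hf : IsInvolutionInvariantTrace f) (hf1 : f 1 ≠ 0)
    {u : CliffordAlgebra Q} (hu : u ≠ 0) : ∃ w, f (u * w) ≠ 0 := by
  obtain ⟨r, rfl⟩ := (Submodule.mem_span_range_iff_exists_fun k).mp
    (span_range_basisBlade hv hspan ▸ Submodule.mem_top (x := u))
  obtain ⟨T, hT⟩ : ∃ T, r T ≠ 0 := by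
    by_contra! h
    simp [h] at hu
  obtain ⟨c, hc, hcT⟩ := basisBlade_mul_self hv (fun i => (hQ i).isUnit) T
  have hoff (S : Finset I) (hST : S ≠ T) :
      f (r S • basisBlade Q v S * basisBlade Q v T) = 0 := by
    obtain ⟨d, hd⟩ := basisBlade_mul_basisBlade hv S T
    rw [smul_mul_assoc, hd, map_smul, map_smul,
      hf.map_basisBlade_eq_zero hv (Finset.symmDiff_nonempty.mpr hST), smul_zero, smul_zero]
  refine ⟨basisBlade Q v T, ?_⟩
  rw [Finset.sum_mul, map_sum, Finset.sum_eq_single T (fun S _ h => hoff S h) (by simp),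
    smul_mul_assoc, hcT, Algebra.algebraMap_eq_smul_one, map_smul, map_smul, smul_eq_mul,
    smul_eq_mul]
  exact mul_ne_zero hT (mul_ne_zero hc.ne_zero hf1)

theorem leftRegularTrace_star (hspan : Submodule.span k (Set.range v) = ⊤)
    (w : CliffordAlgebra Q) :
    leftRegularTrace k (CliffordAlgebra Q) (star w) = leftRegularTrace k (CliffordAlgebra Q) w :=
  LinearMap.congr_fun (isInvolutionInvariantTrace_leftRegularTrace.comp_star.ext hv hspan
    isInvolutionInvariantTrace_leftRegularTrace (by simp)) w

end InvariantTrace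

end CliffordAlgebra

theorem LinearMap.BilinForm.exists_orthogonal_basis_toQuadraticMap_ne_zero
    {k : Type*} [Field k] [CharZero k] {H : Type*} [AddCommGroup H] [Module k H]
    [FiniteDimensional k H] {B : LinearMap.BilinForm k H} (hB : LinearMap.IsSymm B)
    (hBnd : B.Nondegenerate) :
    ∃ b : Module.Basis (Fin (Module.finrank k H)) k H,
      (Pairwise fun i j => B.toQuadraticMap.IsOrtho (b i) (b j)) ∧
        ∀ i, B.toQuadraticMap (b i) ≠ 0 := by
  have : Invertible (2 : k) := invertibleOfNonzero two_ne_zero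
  obtain ⟨b, hb⟩ := LinearMap.BilinForm.exists_orthogonal_basis hB
  exact ⟨b, fun i j hij => (toQuadraticMap_isOrtho hB).mpr (hb hij),
    hb.not_isOrtho_basis_self_of_separatingLeft hBnd.1⟩

theorem CliffordAlgebra.star_ι_mul_ι_of_isOrtho {R : Type*} [CommRing R]
    {M : Type*} [AddCommGroup M] [Module R M] {Q : QuadraticForm R M} {x y : M}
    (h : Q.IsOrtho x y) :
    star (ι Q x * ι Q y) = -(ι Q x * ι Q y) := by
  rw [star_mul, star_ι, star_ι, neg_mul_neg, ι_mul_ι_comm_of_isOrtho h.symm]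

/-- Let `e₁, e₂ ∈ H` satisfy `B(e₁, e₂) = 0`, `Q e₁ ≠ 0`, `Q e₂ ≠ 0`, and
set `a = ι(e₁)·ι(e₂) ∈ C`.  Then the form `σ_a(x, y) = Tr (L_{x·a·ȳ})` on `C` is
alternating and nondegenerate. -/
theorem sigmaForm_alternating_nondegenerate
    {k : Type*} [Field k] [CharZero k]
    {H : Type*} [AddCommGroup H] [Module k H] [FiniteDimensional k H]
    (Q : QuadraticForm k H)
    (B : LinearMap.BilinForm k H)
    (hBQ : ∀ x, B x x = Q x)
    (hBsymm : ∀ x y, B x y = B y x)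
    (hBnd : LinearMap.BilinForm.Nondegenerate B)
    (e₁ e₂ : H) (h12 : B e₁ e₂ = 0) (h1 : Q e₁ ≠ 0) (h2 : Q e₂ ≠ 0) :
    (∀ x y : CliffordAlgebra Q,
        sigmaForm Q (ι Q e₁ * ι Q e₂) x y = - sigmaForm Q (ι Q e₁ * ι Q e₂) y x) ∧
    (∀ x : CliffordAlgebra Q, x ≠ 0 →
        ∃ y : CliffordAlgebra Q, sigmaForm Q (ι Q e₁ * ι Q e₂) x y ≠ 0) := by
  obtain rfl : Q = B.toQuadraticMap := QuadraticMap.ext fun x => (hBQ x).symm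
  have hB : LinearMap.IsSymm B := LinearMap.BilinForm.isSymm_iff.mp ⟨hBsymm⟩
  obtain ⟨b, hbo, hbQ⟩ :=
    LinearMap.BilinForm.exists_orthogonal_basis_toQuadraticMap_ne_zero hB hBnd
  have : Module.Finite k (CliffordAlgebra B.toQuadraticMap) :=
    finite_of_span_range_eq_top hbo b.span_eq
  have ha : star (ι _ e₁ * ι _ e₂) = -(ι _ e₁ * ι _ e₂) :=
    star_ι_mul_ι_of_isOrtho ((LinearMap.BilinForm.toQuadraticMap_isOrtho hB).mpr h12)
  simp only [sigmaForm, ← star_def', ← leftRegularTrace_apply]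
  refine ⟨fun x y => ?_, fun x hx => ?_⟩
  · rw [← leftRegularTrace_star hbo b.span_eq, star_mul, star_mul, star_star, ha, neg_mul,
      mul_neg, map_neg, mul_assoc y]
  · have : Nontrivial (CliffordAlgebra B.toQuadraticMap) := ⟨⟨x, 0, hx⟩⟩
    have ha_unit : IsUnit (ι _ e₁ * ι _ e₂) :=
      (isUnit_ι_of_isUnit _ h1.isUnit).mul (isUnit_ι_of_isUnit _ h2.isUnit)
    have hxa : x * (ι _ e₁ * ι _ e₂) ≠ 0 := ha_unit.mul_left_eq_zero.not.mpr hx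
    have hT1 : leftRegularTrace k (CliffordAlgebra B.toQuadraticMap) 1 ≠ 0 := by
      rw [leftRegularTrace_one]
      exact Nat.cast_ne_zero.mpr Module.finrank_pos.ne'
    obtain ⟨w, hw⟩ := isInvolutionInvariantTrace_leftRegularTrace.exists_map_mul_ne_zero hbo
      b.span_eq hbQ hT1 hxa
    exact ⟨star w, by rwa [star_star]⟩
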